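/- arXiv:math/0511230 — 4 statements merged into one kernel-verified Lean document; each statement's English description precedes it below -/
import Mathlib

section
/- Let v ∈ ℂ² with |v| = 1 and define ψ(x) = √2 (v + x·v)/(1+|x|²) on ℝ², where x·v = x₁e₁v + x₂e₂v with the standard Clifford matrices e₁, e₂. Then e₁·∂_{x₁}ψ + e₂·∂_{x₂}ψ = -e^{u}ψ where u(x) = -log(1+|x|²) + log 2, i.e. Dψ = -(2/(1+|x|²))ψ. -/
open Complex

/-- The standard Hermitian inner product on ℂ², conjugate-linear in the second slot. -/
noncomputable def hermInner (w z : ℂ × ℂ) : ℂ := w.1 * star z.1 + w.2 * star z.2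

/-- Clifford multiplication `x · v = x₁ e₁ v + x₂ e₂ v` with
`e₁ = [[0,1],[-1,0]]`, `e₂ = [[0,i],[i,0]]`. -/
def cl (x₁ x₂ : ℝ) (v : ℂ × ℂ) : ℂ × ℂ :=
  (x₁ : ℂ) • (v.2, -v.1) + (x₂ : ℂ) • (Complex.I * v.2, Complex.I * v.1)

lemma aux_hasDerivAt (u w : ℂ × ℂ) (c a : ℝ) :
    HasDerivAt (fun t : ℝ => (Real.sqrt 2 / (1 + t ^ 2 + c ^ 2)) • (u + (t : ℂ) • w))
      ((Real.sqrt 2 / (1 + a ^ 2 + c ^ 2)) • w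
        + (-(Real.sqrt 2 * (2 * a)) / (1 + a ^ 2 + c ^ 2) ^ 2) • (u + (a : ℂ) • w)) a := by
  have hs : (1 + a ^ 2 + c ^ 2 : ℝ) ≠ 0 := by positivity
  have hg : HasDerivAt (fun t : ℝ => Real.sqrt 2 / (1 + t ^ 2 + c ^ 2))
      (-(Real.sqrt 2 * (2 * a)) / (1 + a ^ 2 + c ^ 2) ^ 2) a := by
    have h1 : HasDerivAt (fun t : ℝ => 1 + t ^ 2 + c ^ 2) (2 * a) a := by
      simpa using (((hasDerivAt_pow 2 a).const_add 1).add_const (c ^ 2))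
    have := (hasDerivAt_const a (Real.sqrt 2)).div h1 hs
    have h3 : HasDerivAt (fun t : ℝ => Real.sqrt 2 / (1 + t ^ 2 + c ^ 2)) _ a := this
    simpa [neg_div] using h3
  have hf : HasDerivAt (fun t : ℝ => u + (t : ℂ) • w) w a := by
    have h2 : HasDerivAt (fun t : ℝ => ((t : ℂ)) • w) ((1 : ℂ) • w) a :=
      (Complex.ofRealCLM.hasDerivAt).smul_const w
    simpa using h2.const_add u
  have h4 : HasDerivAt (fun t : ℝ => (Real.sqrt 2 / (1 + t ^ 2 + c ^ 2)) • (u + (t : ℂ) • w)) _ a := hg.smul hf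
  simpa using h4

/-- The spinor `ψ(x) = √2 (v + x·v)/(1+|x|²)` satisfies the Dirac equation
`Dψ = -(2/(1+|x|²)) ψ = -e^u ψ` for `u = -log(1+|x|²) + log 2`. -/
theorem bubble_spinor_equation (v : ℂ × ℂ) (hv : hermInner v v = 1) :
    ∀ a b : ℝ,
      (((deriv (fun t => ((Real.sqrt 2 / (1 + t ^ 2 + b ^ 2) : ℝ))
              • (v + cl t b v)) a).2,
        -(deriv (fun t => ((Real.sqrt 2 / (1 + t ^ 2 + b ^ 2) : ℝ))
              • (v + cl t b v)) a).1) : ℂ × ℂ)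
      + (Complex.I * (deriv (fun t => ((Real.sqrt 2 / (1 + a ^ 2 + t ^ 2) : ℝ))
              • (v + cl a t v)) b).2,
         Complex.I * (deriv (fun t => ((Real.sqrt 2 / (1 + a ^ 2 + t ^ 2) : ℝ))
              • (v + cl a t v)) b).1)
      = (-(2 / (1 + a ^ 2 + b ^ 2)) : ℝ)
          • (((Real.sqrt 2 / (1 + a ^ 2 + b ^ 2) : ℝ)) • (v + cl a b v)) := by
  intro a b
  have hs : (1 + a ^ 2 + b ^ 2 : ℝ) ≠ 0 := by positivity
  have hsC : (1 + (a : ℂ) ^ 2 + (b : ℂ) ^ 2) ≠ 0 := by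
    have : ((1 + a ^ 2 + b ^ 2 : ℝ) : ℂ) ≠ 0 := by exact_mod_cast hs
    push_cast at this
    exact this
  have e1 : (fun t : ℝ => ((Real.sqrt 2 / (1 + t ^ 2 + b ^ 2) : ℝ)) • (v + cl t b v))
      = fun t : ℝ => (Real.sqrt 2 / (1 + t ^ 2 + b ^ 2))
          • ((v + (b : ℂ) • (Complex.I * v.2, Complex.I * v.1)) + (t : ℂ) • (v.2, -v.1)) := by
    funext t
    simp only [cl]
    module
  have e2 : (fun t : ℝ => ((Real.sqrt 2 / (1 + a ^ 2 + t ^ 2) : ℝ)) • (v + cl a t v))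
      = fun t : ℝ => (Real.sqrt 2 / (1 + t ^ 2 + a ^ 2))
          • ((v + (a : ℂ) • (v.2, -v.1)) + (t : ℂ) • (Complex.I * v.2, Complex.I * v.1)) := by
    funext t
    have h : (1 + a ^ 2 + t ^ 2 : ℝ) = 1 + t ^ 2 + a ^ 2 := by ring
    rw [h]
    simp only [cl]
    module
  rw [e1, e2, (aux_hasDerivAt _ _ b a).deriv, (aux_hasDerivAt _ _ a b).deriv]
  have hba : (1 + b ^ 2 + a ^ 2 : ℝ) = 1 + a ^ 2 + b ^ 2 := by ring
  rw [hba]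
  refine Prod.ext ?_ ?_ <;>
  · simp only [cl, Prod.fst_add, Prod.snd_add, Prod.smul_fst, Prod.smul_snd,
      Complex.real_smul, smul_eq_mul, Complex.ofReal_div, Complex.ofReal_neg,
      Complex.ofReal_mul, Complex.ofReal_pow, Complex.ofReal_ofNat, Complex.ofReal_one,
      Complex.ofReal_add, Complex.I_sq]
    field_simp [hsC]
    ring_nf
    simp only [Complex.I_sq]
    ring
end

section
/- Let v : ℝ² → ℝ be a harmonic function on all of ℝ² such that v(x) ≤ C₁ + C₂ log|x| for all |x| sufficiently large, where C₁, C₂ are positive constants. Then v is constant. -/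
/-- The Euclidean Laplacian on ℝ² via second derivatives. -/
noncomputable def lap2 (u : EuclideanSpace ℝ (Fin 2) → ℝ) (x : EuclideanSpace ℝ (Fin 2)) : ℝ :=
  iteratedFDeriv ℝ 2 u x ![EuclideanSpace.single 0 1, EuclideanSpace.single 0 1]
    + iteratedFDeriv ℝ 2 u x ![EuclideanSpace.single 1 1, EuclideanSpace.single 1 1]

open Complex Metric Set intervalIntegral Filter

lemma clm_ext_complex {F : Type*} [NormedAddCommGroup F] [NormedSpace ℝ F]
    {T S : ℂ →L[ℝ] F} (h1 : T 1 = S 1) (hI : T I = S I) : T = S := by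
  ext w
  have hw : w = (w.re : ℝ) • (1 : ℂ) + (w.im : ℝ) • I := by
    simp [real_smul, Complex.re_add_im]
  rw [hw, map_add, map_add, map_smul, map_smul, map_smul, map_smul, h1, hI]

lemma core_liouville (g : ℂ → ℂ) (u : ℂ → ℝ) (hg : Differentiable ℂ g)
    (hu : ∀ z, HasFDerivAt u
      (Complex.reCLM.comp (((ContinuousLinearMap.mul ℂ ℂ) (g z)).restrictScalars ℝ)) z)
    (A B R₀ : ℝ) (hB : 0 < B)
    (hgrow : ∀ z : ℂ, R₀ ≤ ‖z‖ → u z ≤ A + B * Real.log ‖z‖) :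
    g 0 = 0 := by
  have hgc : Continuous g := hg.continuous
  have hg' : Continuous (deriv g) := (hg.contDiff (n := 2)).continuous_deriv one_le_two
  have hud : Differentiable ℝ u := fun z => (hu z).differentiableAt
  have huc : Continuous u := hud.continuous
  set G : ℂ → ℂ := fun z => ∫ t in (0:ℝ)..1, g ((t : ℂ) * z) with hGdef
  have hGdiff : ∀ z₀ : ℂ, DifferentiableAt ℂ G z₀ := by
    intro z₀
    obtain ⟨K, hK0, hK⟩ : ∃ K : ℝ, 0 ≤ K ∧ ∀ w : ℂ, ‖w‖ ≤ ‖z₀‖ + 1 → ‖deriv g w‖ ≤ K := by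
      obtain ⟨w₀, -, hw₀⟩ := (isCompact_closedBall (0:ℂ) (‖z₀‖ + 1)).exists_isMaxOn
        ⟨0, by simp; positivity⟩ (hg'.norm.continuousOn)
      exact ⟨‖deriv g w₀‖, norm_nonneg _, fun w hw => hw₀ (by simpa [dist_eq_norm] using hw)⟩
    have hdiff : ∀ t : ℝ, ∀ z : ℂ, HasFDerivAt (fun z : ℂ => g ((t:ℂ) * z))
        (ContinuousLinearMap.smulRight (1 : ℂ →L[ℂ] ℂ) (deriv g ((t:ℂ) * z) * (t:ℂ))) z := by
      intro t z
      have h1 : HasDerivAt (fun z : ℂ => g ((t:ℂ) * z)) (deriv g ((t:ℂ) * z) * (t:ℂ)) z := by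
        simpa [Function.comp_def] using
          ((hg ((t:ℂ) * z)).hasDerivAt).comp z ((hasDerivAt_id z).const_mul (t:ℂ))
      exact h1.hasFDerivAt
    have main := intervalIntegral.hasFDerivAt_integral_of_dominated_loc_of_lip
      (𝕜 := ℂ) (μ := MeasureTheory.volume) (a := 0) (b := 1) (s := ball z₀ 1)
      (F := fun z t => g ((t:ℂ) * z))
      (F' := fun t => ContinuousLinearMap.smulRight (1 : ℂ →L[ℂ] ℂ)
        (deriv g ((t:ℂ) * z₀) * (t:ℂ)))
      (x₀ := z₀) (bound := fun _ => K) (ball_mem_nhds z₀ one_pos)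
      (Filter.Eventually.of_forall fun z =>
        ((hgc.comp ((continuous_ofReal).mul continuous_const)).aestronglyMeasurable))
      ((hgc.comp ((continuous_ofReal).mul continuous_const)).intervalIntegrable 0 1)
      ?_ ?_ (intervalIntegrable_const) ?_
    · exact main.2.differentiableAt
    · exact (((ContinuousLinearMap.smulRightL ℂ ℂ ℂ (1 : ℂ →L[ℂ] ℂ)).continuous).comp
        ((hg'.comp ((continuous_ofReal).mul continuous_const)).mul continuous_ofReal)).aestronglyMeasurable
    · refine Filter.Eventually.of_forall fun t ht => ?_
      have ht' : t ∈ Set.Ioc (0:ℝ) 1 := by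
        simpa [Set.uIoc_of_le (zero_le_one (α := ℝ))] using ht
      refine Convex.lipschitzOnWith_of_nnnorm_hasFDerivWithin_le
        (f' := fun z => (ContinuousLinearMap.smulRight (1 : ℂ →L[ℂ] ℂ)
          (deriv g ((t:ℂ) * z) * (t:ℂ))).restrictScalars ℝ)
        (fun z _ => ((hdiff t z).restrictScalars ℝ).hasFDerivWithinAt) (fun z hz => ?_)
        (convex_ball _ _)
      rw [← NNReal.coe_le_coe]
      have h2 : ‖((ContinuousLinearMap.smulRight (1 : ℂ →L[ℂ] ℂ)
          (deriv g ((t:ℂ) * z) * (t:ℂ))).restrictScalars ℝ)‖ = ‖deriv g ((t:ℂ) * z) * (t:ℂ)‖ := by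
        rw [ContinuousLinearMap.norm_restrictScalars, ContinuousLinearMap.norm_smulRight_apply,
          norm_one, one_mul]
      have h3 : ‖(t:ℂ) * z‖ ≤ ‖z₀‖ + 1 := by
        rw [norm_mul]
        calc ‖(t:ℂ)‖ * ‖z‖ ≤ 1 * ‖z‖ := by
              apply mul_le_mul_of_nonneg_right _ (norm_nonneg _)
              simpa [Complex.norm_real, abs_of_pos ht'.1] using ht'.2
          _ ≤ ‖z₀‖ + 1 := by
              rw [one_mul]
              have := mem_ball_iff_norm.1 hz
              calc ‖z‖ = ‖z₀ + (z - z₀)‖ := by ring_nf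
                _ ≤ ‖z₀‖ + ‖z - z₀‖ := norm_add_le _ _
                _ ≤ ‖z₀‖ + 1 := by linarith
      calc (‖_‖₊ : ℝ) = ‖deriv g ((t:ℂ) * z) * (t:ℂ)‖ := by rw [coe_nnnorm, h2]
        _ ≤ K * 1 := by
            rw [norm_mul]
            apply mul_le_mul (hK _ h3) _ (norm_nonneg _) hK0
            simpa [Complex.norm_real, abs_of_pos ht'.1] using ht'.2
        _ ≤ (Real.nnabs K : ℝ) := by simp [Real.coe_nnabs, _root_.abs_of_nonneg hK0]
    · exact Filter.Eventually.of_forall fun t _ => hdiff t z₀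
  set h : ℂ → ℂ := fun z => z * G z with hhdef
  have hhdiff : Differentiable ℂ h := fun z => (differentiableAt_id.mul (hGdiff z))
  have hh0 : h 0 = 0 := by simp [hhdef]
  have hG0 : G 0 = g 0 := by simp [hGdef]
  have hder : HasDerivAt h (g 0) 0 := by
    have := (hasDerivAt_id (0:ℂ)).mul ((hGdiff 0).hasDerivAt)
    simp only [id, one_mul, zero_mul, add_zero, hG0] at this
    exact this
  have hre : ∀ z, (h z).re = u z - u 0 := by
    intro z
    show (z * ∫ t in (0:ℝ)..1, g ((t : ℂ) * z)).re = u z - u 0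
    have hint : IntervalIntegrable (fun t : ℝ => g ((t:ℂ) * z)) MeasureTheory.volume 0 1 :=
      (hgc.comp ((continuous_ofReal).mul continuous_const)).intervalIntegrable 0 1
    have h1 : z * ∫ t in (0:ℝ)..1, g ((t : ℂ) * z) = ∫ t in (0:ℝ)..1, z * g ((t:ℂ) * z) := by
      rw [intervalIntegral.integral_const_mul]
    have h2 : (∫ t in (0:ℝ)..1, z * g ((t:ℂ) * z)).re
        = ∫ t in (0:ℝ)..1, (z * g ((t:ℂ) * z)).re := by
      rw [← Complex.reCLM_apply, ← ContinuousLinearMap.intervalIntegral_comp_comm _ (hint.const_mul z)]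
      simp
    have h3 : ∀ t : ℝ, HasDerivAt (fun s : ℝ => u ((s:ℂ) * z)) ((g ((t:ℂ) * z) * z).re) t := by
      intro t
      have hin : HasDerivAt (fun s : ℝ => (s:ℂ) * z) z t := by
        simpa using (ContinuousLinearMap.hasDerivAt (e := Complex.ofRealCLM) (x := t)).mul_const z
      have := (hu ((t:ℂ) * z)).comp_hasDerivAt t hin
      rw [show (fun s : ℝ => u ((s:ℂ) * z)) = u ∘ (fun s : ℝ => (s:ℂ) * z) from rfl]
      simpa using this
    have h4 : u z - u 0 = ∫ t in (0:ℝ)..1, (g ((t:ℂ) * z) * z).re := by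
      have := intervalIntegral.integral_deriv_eq_sub' (a := (0:ℝ)) (b := (1:ℝ))
        (fun s : ℝ => u ((s:ℂ) * z))
        (f' := fun t : ℝ => (g ((t:ℂ) * z) * z).re) (funext fun t => (h3 t).deriv)
        (fun t _ => (h3 t).differentiableAt)
        (((Complex.continuous_re.comp ((hgc.comp ((continuous_ofReal).mul
          continuous_const)).mul continuous_const))).continuousOn)
      simpa using this.symm
    rw [h1, h2, h4]
    congr 1; funext t; rw [mul_comm]
  clear hG0 hGdiff
  clear_value G h
  clear hGdef hhdef G
  set g0 : ℂ := g 0 with hg0def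
  show g0 = 0
  set r₁ : ℝ := max R₀ 1 with hr₁
  have hr₁1 : (1:ℝ) ≤ r₁ := le_max_right _ _
  obtain ⟨x₀, -, hx₀⟩ := (isCompact_closedBall (0:ℂ) r₁).exists_isMaxOn
    ⟨0, by simp; linarith⟩ huc.continuousOn
  set M₀ : ℝ := max (u x₀) A - u 0 + 1 with hM₀
  set M : ℝ → ℝ := fun r => M₀ + B * Real.log r with hM
  -- key estimates on ball 0 r
  have hMbound : ∀ r : ℝ, r₁ ≤ r → ∀ z ∈ ball (0:ℂ) r, (h z).re < M r := by
    intro r hr z hz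
    have hlogr : 0 ≤ Real.log r := Real.log_nonneg (by linarith)
    rw [hre]
    rcases le_or_gt ‖z‖ r₁ with hc | hc
    · have : u z ≤ u x₀ := hx₀ (by simpa [dist_eq_norm] using hc)
      have h5 : u z ≤ max (u x₀) A := this.trans (le_max_left _ _)
      simp only [hM, hM₀]
      nlinarith [mul_nonneg hB.le hlogr]
    · have hz1 : (1:ℝ) ≤ ‖z‖ := le_trans hr₁1 hc.le
      have h1 : u z ≤ A + B * Real.log ‖z‖ :=
        hgrow z (le_trans (le_max_left _ _) hc.le)
      have h2 : Real.log ‖z‖ ≤ Real.log r :=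
        Real.log_le_log (by linarith) (le_of_lt (by simpa [mem_ball, dist_eq_norm] using hz))
      have : A ≤ max (u x₀) A := le_max_right _ _
      simp only [hM, hM₀]
      nlinarith
  have hMpos : ∀ r : ℝ, r₁ ≤ r → 0 < M r := by
    intro r hr
    have := hMbound r hr 0 (by simp; linarith)
    rw [hh0] at this; simpa using this
  -- Schwarz estimate
  have hkey : ∀ r : ℝ, r₁ ≤ r → ‖g0‖ ≤ 2 * M r / r := by
    intro r hr
    have hMr := hMpos r hr
    have hrpos : (0:ℝ) < r := by linarith
    set F : ℂ → ℂ := fun w => (2 * (M r : ℂ) - h w)⁻¹ with hF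
    have hne : ∀ w ∈ ball (0:ℂ) r, 2 * (M r : ℂ) - h w ≠ 0 := by
      intro w hw
      have hlt := hMbound r hr w hw
      intro hcon
      have : (2 * (M r : ℂ) - h w).re = 0 := by rw [hcon]; simp
      simp only [sub_re, mul_re, ofReal_re, ofReal_im] at this
      norm_num at this
      nlinarith
    have hFdiff : DifferentiableOn ℂ F (ball 0 r) :=
      ((differentiable_const _).sub hhdiff).differentiableOn.inv hne
    have hF0 : F 0 = (2 * (M r : ℂ))⁻¹ := by simp [hF, hh0]
    have hmaps : MapsTo F (ball (0:ℂ) r) (ball (F 0) (1 / (2 * M r))) := by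
      intro w hw
      rw [mem_ball, dist_eq_norm, hF0, hF]
      have hne' := hne w hw
      have h2M : (2 * (M r : ℂ)) ≠ 0 := by
        simp only [ne_eq, mul_eq_zero, OfNat.ofNat_ne_zero, false_or, ofReal_eq_zero]
        exact hMr.ne'
      have heq : (2 * (M r : ℂ) - h w)⁻¹ - (2 * (M r : ℂ))⁻¹
          = h w / ((2 * (M r : ℂ) - h w) * (2 * (M r : ℂ))) := by
        rw [inv_sub_inv hne' h2M]; ring
      rw [heq]
      have hnormM : ‖(2 * (M r : ℂ))‖ = 2 * M r := by
        rw [norm_mul]; simp [Complex.norm_real, abs_of_pos hMr]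
      have hnorm : ‖h w‖ < ‖2 * (M r : ℂ) - h w‖ := by
        have hlt := hMbound r hr w hw
        rw [Complex.norm_def, Complex.norm_def]
        apply Real.sqrt_lt_sqrt (normSq_nonneg _)
        simp only [Complex.normSq_apply, sub_re, sub_im, mul_re, mul_im,
          ofReal_re, ofReal_im, Complex.re_ofNat, Complex.im_ofNat]
        nlinarith [sq_nonneg (h w).im]
      rw [norm_div, norm_mul, hnormM,
        div_lt_iff₀ (mul_pos (norm_pos_iff.2 hne') (by positivity))]
      have hfs : 1/(2*M r) * (‖2*(M r:ℂ) - h w‖ * (2*M r)) = ‖2*(M r:ℂ) - h w‖ := by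
        field_simp
      rw [hfs]; exact hnorm
    -- Schwarz lemma
    have hsch := Complex.norm_deriv_le_div_of_mapsTo_ball hFdiff (hmaps.mono_right ball_subset_closedBall) hrpos
    -- compute deriv F 0
    have hFder : HasDerivAt F (g0 / (2 * (M r:ℂ))^2) 0 := by
      have h1 : HasDerivAt (fun w => 2 * (M r : ℂ) - h w) (-g0) 0 := by
        rw [show (fun w => 2 * (M r : ℂ) - h w) = (fun _ => 2 * (M r : ℂ)) - h from rfl]
        simpa using (hasDerivAt_const (0:ℂ) (2*(M r:ℂ))).sub hder
      have h2M : (2 * (M r : ℂ) - h 0) ≠ 0 := hne 0 (by simpa using hrpos)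
      have := h1.inv h2M
      rw [show F = (fun w => 2 * (M r : ℂ) - h w)⁻¹ from rfl]
      simpa [hh0, neg_neg, div_eq_mul_inv] using this
    have hFder0 : deriv F 0 = g0 / (2 * (M r:ℂ))^2 := hFder.deriv
    rw [hFder0] at hsch
    have h2M : ‖(2 * (M r : ℂ))^2‖ = (2 * M r)^2 := by
      rw [norm_pow, norm_mul]; simp [Complex.norm_real, abs_of_pos hMr]
    rw [norm_div, h2M, div_le_div_iff₀ (by positivity) hrpos] at hsch
    have heq2 : 1 / (2 * M r) * (2 * M r)^2 = 2 * M r := by field_simp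
    rw [heq2] at hsch
    rw [le_div_iff₀ hrpos]
    exact hsch
  -- take r → ∞
  have hlim : Tendsto (fun r : ℝ => 2 * M r / r) atTop (nhds 0) := by
    have h1 : Tendsto (fun r : ℝ => 2 * M₀ / r) atTop (nhds 0) :=
      tendsto_const_nhds.div_atTop tendsto_id
    have h2 : Tendsto (fun r : ℝ => 2 * B * (Real.log r / r)) atTop (nhds 0) := by
      simpa using (Real.isLittleO_log_id_atTop.tendsto_div_nhds_zero).const_mul (2*B)
    have := h1.add h2
    rw [add_zero] at this
    apply this.congr'
    filter_upwards [eventually_gt_atTop (0:ℝ)] with r hrp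
    simp only [hM]
    field_simp
  have : ‖g0‖ ≤ 0 :=
    ge_of_tendsto hlim (by filter_upwards [eventually_ge_atTop r₁] with r hr using hkey r hr)
  simpa using norm_le_zero_iff.1 this

noncomputable def Lmap : ℂ →L[ℝ] EuclideanSpace ℝ (Fin 2) :=
  Complex.reCLM.smulRight (EuclideanSpace.single 0 1)
    + Complex.imCLM.smulRight (EuclideanSpace.single 1 1)

lemma Lmap_apply (z : ℂ) : Lmap z
    = z.re • EuclideanSpace.single 0 1 + z.im • EuclideanSpace.single 1 1 := rfl

lemma Lmap_one : Lmap 1 = EuclideanSpace.single 0 1 := by simp [Lmap_apply]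

lemma Lmap_I : Lmap I = EuclideanSpace.single 1 1 := by simp [Lmap_apply]

lemma Lmap_norm (z : ℂ) : ‖Lmap z‖ = ‖z‖ := by
  rw [EuclideanSpace.norm_eq]
  have h0 : ∀ i : Fin 2, Lmap z i = if i = 0 then z.re else z.im := by
    intro i
    fin_cases i <;>
      simp [Lmap_apply, EuclideanSpace.single_apply, PiLp.add_apply, PiLp.smul_apply]
  rw [Fin.sum_univ_two, h0 0, h0 1]
  simp [Complex.norm_def, Complex.normSq_apply, sq, abs_mul_abs_self]

lemma Lmap_surj (x : EuclideanSpace ℝ (Fin 2)) : Lmap ((x 0 : ℝ) + (x 1 : ℝ) * I) = x := by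
  ext i
  fin_cases i <;>
    simp [Lmap_apply, EuclideanSpace.single_apply, PiLp.add_apply, PiLp.smul_apply]


set_option maxHeartbeats 2000000 in
/-- A harmonic function on ℝ² bounded above by `C₁ + C₂ log|x|` for large `|x|`
is constant. -/
theorem liouville_log_growth (v : EuclideanSpace ℝ (Fin 2) → ℝ)
    (hv : ContDiff ℝ 2 v) (hharm : ∀ x, lap2 v x = 0)
    (C₁ C₂ R : ℝ) (hC₁ : 0 < C₁) (hC₂ : 0 < C₂)
    (hbound : ∀ x : EuclideanSpace ℝ (Fin 2), R ≤ ‖x‖ → v x ≤ C₁ + C₂ * Real.log ‖x‖) :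
    ∃ c : ℝ, ∀ x, v x = c := by
  set e0 : EuclideanSpace ℝ (Fin 2) := EuclideanSpace.single 0 1 with he0
  set e1 : EuclideanSpace ℝ (Fin 2) := EuclideanSpace.single 1 1 with he1
  set f' : EuclideanSpace ℝ (Fin 2) → (EuclideanSpace ℝ (Fin 2) →L[ℝ] ℝ) := fderiv ℝ v with hf'
  set f'' : EuclideanSpace ℝ (Fin 2) → (EuclideanSpace ℝ (Fin 2) →L[ℝ] EuclideanSpace ℝ (Fin 2) →L[ℝ] ℝ) :=
    fderiv ℝ f' with hf''
  have hv1 : ∀ y, HasFDerivAt v (f' y) y := fun y =>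
    (hv.differentiable (by norm_num) y).hasFDerivAt
  have hvC1 : ContDiff ℝ 1 f' := hv.fderiv_right (le_refl 2)
  have hf''d : ∀ x, HasFDerivAt f' (f'' x) x := fun x =>
    ((hvC1.differentiable (by norm_num)) x).hasFDerivAt
  have hsym : ∀ x a b, f'' x a b = f'' x b a := fun x =>
    second_derivative_symmetric hv1 (hf''d x)
  have hlap : ∀ x, f'' x e0 e0 + f'' x e1 e1 = 0 := by
    intro x
    have := hharm x
    rw [lap2] at this
    rw [iteratedFDeriv_two_apply, iteratedFDeriv_two_apply] at this
    simpa [he0, he1] using this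
  -- the function u on ℂ and candidate holomorphic derivative g
  set u : ℂ → ℝ := fun z => v (Lmap z) with hu_def
  set g : ℂ → ℂ := fun z => (f' (Lmap z) e0 : ℂ) - (f' (Lmap z) e1 : ℂ) * I with hg_def
  -- real derivative of u
  have hu : ∀ z, HasFDerivAt u
      (Complex.reCLM.comp (((ContinuousLinearMap.mul ℂ ℂ) (g z)).restrictScalars ℝ)) z := by
    intro z
    have h1 : HasFDerivAt u ((f' (Lmap z)).comp Lmap) z :=
      (hv1 (Lmap z)).comp z Lmap.hasFDerivAt
    have h2 : (f' (Lmap z)).comp Lmap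
        = Complex.reCLM.comp (((ContinuousLinearMap.mul ℂ ℂ) (g z)).restrictScalars ℝ) := by
      apply clm_ext_complex
      · simp [Lmap_one, hg_def, he0]
      · simp [Lmap_I, hg_def, he1]
    rwa [h2] at h1
  -- g is entire
  have hg : Differentiable ℂ g := by
    intro z
    have hc1 : HasFDerivAt (fun z : ℂ => f' (Lmap z) e0)
        (((ContinuousLinearMap.apply ℝ ℝ e0).comp (f'' (Lmap z))).comp Lmap) z := by
      exact (ContinuousLinearMap.apply ℝ ℝ e0).hasFDerivAt.comp z
        (((hf''d (Lmap z)).comp z Lmap.hasFDerivAt))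
    have hc2 : HasFDerivAt (fun z : ℂ => f' (Lmap z) e1)
        (((ContinuousLinearMap.apply ℝ ℝ e1).comp (f'' (Lmap z))).comp Lmap) z := by
      exact (ContinuousLinearMap.apply ℝ ℝ e1).hasFDerivAt.comp z
        (((hf''d (Lmap z)).comp z Lmap.hasFDerivAt))
    -- real derivative of g
    have hgr : HasFDerivAt g
        ((Complex.ofRealCLM.comp (((ContinuousLinearMap.apply ℝ ℝ e0).comp (f'' (Lmap z))).comp Lmap))
          - (Complex.ofRealCLM.comp (((ContinuousLinearMap.apply ℝ ℝ e1).comp (f'' (Lmap z))).comp Lmap)).smulRight I) z := by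
      have ha := Complex.ofRealCLM.hasFDerivAt.comp z hc1
      have hb := (Complex.ofRealCLM.hasFDerivAt.comp z hc2)
      have hb' := hb.mul_const' I
      exact ha.sub hb'
    -- the real derivative is complex linear
    have hrest : (ContinuousLinearMap.smulRight (1 : ℂ →L[ℂ] ℂ)
          ((f'' (Lmap z) e0 e0 : ℂ) - (f'' (Lmap z) e0 e1 : ℂ) * I)).restrictScalars ℝ
        = ((Complex.ofRealCLM.comp (((ContinuousLinearMap.apply ℝ ℝ e0).comp (f'' (Lmap z))).comp Lmap))
          - (Complex.ofRealCLM.comp (((ContinuousLinearMap.apply ℝ ℝ e1).comp (f'' (Lmap z))).comp Lmap)).smulRight I) := by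
      apply clm_ext_complex
      · simp [Lmap_one, smul_eq_mul, he0]
      · simp only [ContinuousLinearMap.coe_restrictScalars',
          ContinuousLinearMap.smulRight_apply, ContinuousLinearMap.coe_sub',
          Pi.sub_apply, ContinuousLinearMap.coe_comp', Function.comp_apply,
          ContinuousLinearMap.apply_apply, ContinuousLinearMap.one_apply,
          Complex.ofRealCLM_apply, Lmap_I, smul_eq_mul]
        apply Complex.ext <;>
          simp only [Complex.mul_re, Complex.mul_im, Complex.sub_re, Complex.sub_im,
            Complex.ofReal_re, Complex.ofReal_im, Complex.I_re, Complex.I_im,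
            Complex.mul_re, Complex.mul_im] <;>
          nlinarith [hsym (Lmap z) e0 e1, hlap (Lmap z)]
    exact (hasFDerivAt_of_restrictScalars ℝ hgr hrest).differentiableAt
  -- apply the core lemma at every recentered point
  have hg0 : ∀ a : ℂ, g a = 0 := by
    intro a
    have hga : Differentiable ℂ (fun z => g (a + z)) :=
      hg.comp (differentiable_id.const_add a)
    have hua : ∀ z, HasFDerivAt (fun z => u (a + z))
        (Complex.reCLM.comp (((ContinuousLinearMap.mul ℂ ℂ) (g (a + z))).restrictScalars ℝ)) z := by
      intro z
      have h1 := (hu (a + z)).comp z ((hasFDerivAt_id z).const_add a)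
      exact h1.congr_fderiv (by ext w; simp)
    have hgrow : ∀ z : ℂ, max (R + ‖a‖) (‖a‖ + 2) ≤ ‖z‖ →
        (fun z => u (a + z)) z ≤ C₁ + (2 * C₂) * Real.log ‖z‖ := by
      intro z hz
      have h0 : ‖z‖ ≤ ‖a + z‖ + ‖a‖ := by
        calc ‖z‖ = ‖a + z - a‖ := by rw [add_sub_cancel_left]
          _ ≤ ‖a + z‖ + ‖a‖ := norm_sub_le _ _
      have hza : ‖a‖ + 2 ≤ ‖z‖ := le_trans (le_max_right _ _) hz
      have hzR : R + ‖a‖ ≤ ‖z‖ := le_trans (le_max_left _ _) hz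
      have hz2 : (2:ℝ) ≤ ‖z‖ := by linarith [norm_nonneg a]
      have h3 : R ≤ ‖a + z‖ := by linarith
      have hpos : (2:ℝ) ≤ ‖a + z‖ := by linarith
      have h4 := hbound (Lmap (a + z)) (by rwa [Lmap_norm])
      rw [Lmap_norm] at h4
      have h5 : ‖a + z‖ ≤ ‖z‖^2 := by
        have h6 : ‖a + z‖ ≤ ‖a‖ + ‖z‖ := norm_add_le _ _
        nlinarith
      have h7 : Real.log ‖a + z‖ ≤ 2 * Real.log ‖z‖ := by
        calc Real.log ‖a + z‖ ≤ Real.log (‖z‖^2) := by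
              apply Real.log_le_log (by linarith) h5
          _ = 2 * Real.log ‖z‖ := by
              rw [Real.log_pow]; norm_num
      have hlogpos : 0 ≤ Real.log ‖z‖ := Real.log_nonneg (by linarith)
      calc u (a + z) ≤ C₁ + C₂ * Real.log ‖a + z‖ := h4
        _ ≤ C₁ + (2 * C₂) * Real.log ‖z‖ := by nlinarith
    have := core_liouville (fun z => g (a + z)) (fun z => u (a + z)) hga hua
      C₁ (2 * C₂) (max (R + ‖a‖) (‖a‖ + 2)) (by linarith) hgrow
    simpa using this
  -- hence u has zero derivative and is constant
  have huconst : ∀ z, u z = u 0 := by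
    have hud : Differentiable ℝ u := fun z => (hu z).differentiableAt
    intro z
    apply is_const_of_fderiv_eq_zero hud
    intro x
    have h1 := (hu x).fderiv
    rw [hg0 x] at h1
    simp only [map_zero] at h1
    rw [h1]
    simp
  refine ⟨v 0, fun x => ?_⟩
  have h1 := huconst ((x 0 : ℝ) + (x 1 : ℝ) * I)
  rw [hu_def] at h1
  simp only [Lmap_surj] at h1
  rw [h1]
  congr 1
  show Lmap 0 = 0
  simp
end

section
/- Let u : ℝ² → ℝ be measurable with ∫_{ℝ²} e^{2u} dx < ∞, and suppose u(x)/log|x| → -α/(2π) uniformly as |x| → ∞ for some constant α. Then α ≥ 2π. -/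
open MeasureTheory Real Metric Filter

/-- If `∫_{ℝ²} e^{2u} < ∞` and `u(x)/log|x| → -α/(2π)` uniformly as `|x| → ∞`,
then `α ≥ 2π`. -/
theorem total_mass_lower_bound (u : EuclideanSpace ℝ (Fin 2) → ℝ) (hm : Measurable u)
    (hint : Integrable (fun x => Real.exp (2 * u x))) (α : ℝ)
    (hasy : ∀ ε > 0, ∃ R : ℝ, ∀ x : EuclideanSpace ℝ (Fin 2),
      R ≤ ‖x‖ → |u x / Real.log ‖x‖ + α / (2 * π)| < ε) :
    2 * π ≤ α := by
  by_contra hα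
  push_neg at hα
  have hπ := Real.pi_pos
  set ε : ℝ := (2 * π - α) / (4 * π) with hε_def
  have hε : 0 < ε := div_pos (by linarith) (by linarith)
  set p' : ℝ := α / π + 2 * ε with hp'_def
  have hp'2 : p' < 2 := by
    have h1 : p' = (α + 2 * π) / (2 * π) := by
      rw [hp'_def, hε_def]; field_simp; ring
    rw [h1]
    rw [div_lt_iff₀ (by linarith : (0:ℝ) < 2 * π)]
    linarith
  set p : ℝ := max 0 p' with hp_def
  have hp0 : 0 ≤ p := le_max_left _ _
  have hp2 : p < 2 := max_lt two_pos hp'2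
  obtain ⟨R, hR⟩ := hasy ε hε
  set R' : ℝ := max R 2 with hR'_def
  have hR'2 : (2:ℝ) ≤ R' := le_max_right _ _
  have hR'R : R ≤ R' := le_max_left _ _
  have hR'0 : (0:ℝ) < R' := by linarith
  set c := volume (ball (0 : EuclideanSpace ℝ (Fin 2)) 1) with hc_def
  have hc0 : c ≠ 0 := (measure_ball_pos _ _ one_pos).ne'
  have hctop : c ≠ ⊤ := measure_ball_lt_top.ne
  set I := ∫⁻ x, ENNReal.ofReal (Real.exp (2 * u x)) with hI_def
  have hI : I < ⊤ := by
    refine lt_of_le_of_lt (lintegral_mono fun x => ?_) hint.hasFiniteIntegral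
    rw [Real.enorm_eq_ofReal_abs]
    exact ENNReal.ofReal_le_ofReal (le_abs_self _)
  -- key estimate on each annulus
  set a : ℕ → ℝ := fun n =>
    Real.exp (-p * Real.log (2 * (R' * 2 ^ n))) * (3 * (R' * 2 ^ n) ^ 2) with ha_def
  have key : ∀ n : ℕ, ENNReal.ofReal (a n) * c ≤ I := by
    intro n
    set r₁ : ℝ := R' * 2 ^ n with hr₁_def
    have hr₁2 : (2:ℝ) ≤ r₁ := by
      calc (2:ℝ) ≤ R' := hR'2
      _ = R' * 1 := (mul_one _).symm
      _ ≤ R' * 2 ^ n := by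
          exact mul_le_mul_of_nonneg_left (one_le_pow₀ (by norm_num : (1:ℝ) ≤ 2)) hR'0.le
    have hr₁0 : (0:ℝ) < r₁ := by linarith
    have hr₁R' : R' ≤ r₁ := by
      rw [hr₁_def]
      nlinarith [one_le_pow₀ (by norm_num : (1:ℝ) ≤ 2) (n := n)]
    set r₂ : ℝ := 2 * r₁ with hr₂_def
    have hr₂0 : (0:ℝ) < r₂ := by positivity
    set A : Set (EuclideanSpace ℝ (Fin 2)) := closedBall 0 r₂ \ ball 0 r₁ with hA_def
    have hAmeas : MeasurableSet A := measurableSet_closedBall.diff measurableSet_ball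
    have hμA : volume A = ENNReal.ofReal (3 * r₁ ^ 2) * c := by
      rw [hA_def, measure_diff (ball_subset_closedBall.trans
            (closedBall_subset_closedBall (by linarith)))
          measurableSet_ball.nullMeasurableSet measure_ball_lt_top.ne,
        Measure.addHaar_closedBall _ _ hr₂0.le, Measure.addHaar_ball _ _ hr₁0.le,
        finrank_euclideanSpace_fin, ← hc_def,
        ← ENNReal.sub_mul (fun _ _ => hctop), ← ENNReal.ofReal_sub _ (by positivity)]
      congr 2
      rw [hr₂_def]; ring
    have hpt : ∀ x ∈ A, Real.exp (-p * Real.log r₂) ≤ Real.exp (2 * u x) := by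
      intro x hx
      obtain ⟨hx₂, hx₁⟩ := hx
      rw [mem_closedBall_zero_iff] at hx₂
      rw [mem_ball_zero_iff, not_lt] at hx₁
      have hx1 : (1:ℝ) < ‖x‖ := by linarith
      have hlog : 0 < Real.log ‖x‖ := Real.log_pos hx1
      have habs := hR x (by linarith)
      rw [abs_lt] at habs
      have h1 : -α / (2 * π) - ε < u x / Real.log ‖x‖ := by
        have := habs.1
        have : -(ε) < u x / Real.log ‖x‖ + α / (2 * π) := this
        rw [neg_div]; linarith
      have h2 : (-α / (2 * π) - ε) * Real.log ‖x‖ < u x :=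
        (lt_div_iff₀ hlog).mp h1
      have h3 : -p' * Real.log ‖x‖ ≤ 2 * u x := by
        have hps : -p' = 2 * (-α / (2 * π) - ε) := by
          rw [hp'_def]; field_simp; ring
        rw [hps]; nlinarith
      have h4 : -p * Real.log ‖x‖ ≤ -p' * Real.log ‖x‖ := by
        have : p' ≤ p := le_max_right _ _
        nlinarith
      have h5 : -p * Real.log r₂ ≤ -p * Real.log ‖x‖ := by
        have hlx : Real.log ‖x‖ ≤ Real.log r₂ :=
          Real.log_le_log (by linarith) hx₂
        nlinarith
      exact Real.exp_le_exp.mpr (by linarith)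
    calc ENNReal.ofReal (a n) * c
        = ENNReal.ofReal (Real.exp (-p * Real.log r₂)) * volume A := by
          rw [hμA, ha_def, ENNReal.ofReal_mul (Real.exp_nonneg _), mul_assoc]
      _ = ∫⁻ x in A, ENNReal.ofReal (Real.exp (-p * Real.log r₂)) := by
          rw [setLIntegral_const, mul_comm]
      _ ≤ ∫⁻ x in A, ENNReal.ofReal (Real.exp (2 * u x)) := by
          refine setLIntegral_mono ((hm.const_mul 2).exp.ennreal_ofReal) fun x hx => ?_
          exact ENNReal.ofReal_le_ofReal (hpt x hx)
      _ ≤ I := setLIntegral_le_lintegral _ _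
  -- the real bound
  have hIc : I / c ≠ ⊤ := (ENNReal.div_lt_top hI.ne hc0).ne
  have hB : ∀ n : ℕ, a n ≤ (I / c).toReal := by
    intro n
    have h1 : ENNReal.ofReal (a n) ≤ I / c :=
      (ENNReal.le_div_iff_mul_le (Or.inl hc0) (Or.inl hctop)).mpr (key n)
    have h2 : a n ≤ (ENNReal.ofReal (a n)).toReal :=
      le_of_eq (ENNReal.toReal_ofReal (by positivity)).symm
    calc a n ≤ (ENNReal.ofReal (a n)).toReal := h2
      _ ≤ (I / c).toReal := ENNReal.toReal_mono hIc h1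
  -- a n tends to infinity
  have ha_eq : ∀ n : ℕ, a n = (3 * (2:ℝ) ^ (-p)) * (R' * 2 ^ n) ^ (2 - p) := by
    intro n
    have hr₁0 : (0:ℝ) < R' * 2 ^ n := by positivity
    have hr₂0 : (0:ℝ) < 2 * (R' * 2 ^ n) := by positivity
    have hne : ((R' * 2 ^ n : ℝ) ^ p) ≠ 0 := (Real.rpow_pos_of_pos hr₁0 p).ne'
    have hne2 : ((2:ℝ) ^ p) ≠ 0 := (Real.rpow_pos_of_pos two_pos p).ne'
    simp only [ha_def]
    rw [show -p * Real.log (2 * (R' * 2 ^ n)) = Real.log (2 * (R' * 2 ^ n)) * (-p) by ring,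
      ← Real.rpow_def_of_pos hr₂0, Real.mul_rpow (by norm_num) hr₁0.le,
      Real.rpow_sub hr₁0, Real.rpow_two, Real.rpow_neg hr₁0.le,
      Real.rpow_neg (by norm_num : (0:ℝ) ≤ 2)]
    field_simp
  have h1 : Tendsto (fun n : ℕ => R' * 2 ^ n) atTop atTop :=
    (tendsto_pow_atTop_atTop_of_one_lt one_lt_two).const_mul_atTop hR'0
  have h2 : Tendsto (fun n : ℕ => ((R' * 2 ^ n : ℝ)) ^ (2 - p)) atTop atTop :=
    (tendsto_rpow_atTop (by linarith)).comp h1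
  have h3 : Tendsto a atTop atTop := by
    have hC : (0:ℝ) < 3 * (2:ℝ) ^ (-p) := by positivity
    have := h2.const_mul_atTop hC
    refine this.congr fun n => (ha_eq n).symm
  obtain ⟨n, hn⟩ := (h3.eventually (eventually_gt_atTop ((I / c).toReal))).exists
  exact absurd (hB n) (not_le.mpr hn)
end

section
/- Let u be a C² function on the annulus {x ∈ ℝ² : |x| ≥ R} satisfying |∂u/∂r + α/(2π r)| ≤ C r^{-1-ε} and |∂u/∂θ| ≤ C r^{-ε} in polar coordinates (r, θ), for constants α ∈ ℝ and C, ε > 0. Then there exists a constant c ∈ ℝ such that u(x) = -(α/2π) log|x| + c + O(|x|^{-ε'}) as |x| → ∞ for some ε' > 0. -/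
open Real Set

lemma polar_norm (s θ : ℝ) (hs : 0 ≤ s) :
    Real.sqrt ((s * Real.cos θ) ^ 2 + (s * Real.sin θ) ^ 2) = s := by
  have h : (s * Real.cos θ) ^ 2 + (s * Real.sin θ) ^ 2 = s ^ 2 := by
    rw [mul_pow, mul_pow, ← mul_add, Real.cos_sq_add_sin_sq, mul_one]
  rw [h, Real.sqrt_sq hs]

lemma udiff {u : ℝ × ℝ → ℝ} {R : ℝ}
    (hu : ContDiffOn ℝ 2 u {p : ℝ × ℝ | R ≤ Real.sqrt (p.1 ^ 2 + p.2 ^ 2)})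
    {p : ℝ × ℝ} (hp : R < Real.sqrt (p.1 ^ 2 + p.2 ^ 2)) : DifferentiableAt ℝ u p := by
  have hopen : IsOpen {q : ℝ × ℝ | R < Real.sqrt (q.1 ^ 2 + q.2 ^ 2)} :=
    isOpen_lt continuous_const (by fun_prop)
  exact (hu.differentiableOn (by norm_num)).differentiableAt
    (Filter.mem_of_superset (hopen.mem_nhds hp) fun q hq => le_of_lt (Set.mem_setOf.mp hq))

/-- From the polar gradient estimates `|u_r + α/(2πr)| ≤ C r^{-1-ε}` and
`|u_θ| ≤ C r^{-ε}` one obtains `u(x) = -(α/2π) log|x| + c + O(|x|^{-ε'})`. -/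
theorem log_asymptotics_from_gradient (u : ℝ × ℝ → ℝ) (R α C ε : ℝ)
    (hR : 0 < R) (hC : 0 < C) (hε : 0 < ε)
    (hu : ContDiffOn ℝ 2 u {p : ℝ × ℝ | R ≤ Real.sqrt (p.1 ^ 2 + p.2 ^ 2)})
    (hrad : ∀ r θ : ℝ, R ≤ r →
      |deriv (fun s => u (s * Real.cos θ, s * Real.sin θ)) r + α / (2 * π * r)|
        ≤ C * r ^ (-1 - ε))
    (hang : ∀ r θ : ℝ, R ≤ r →
      |deriv (fun t => u (r * Real.cos t, r * Real.sin t)) θ| ≤ C * r ^ (-ε)) :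
    ∃ (c C' ε' R' : ℝ), 0 < ε' ∧ 0 < C' ∧
      ∀ p : ℝ × ℝ, R' ≤ Real.sqrt (p.1 ^ 2 + p.2 ^ 2) →
        |u p + (α / (2 * π)) * Real.log (Real.sqrt (p.1 ^ 2 + p.2 ^ 2)) - c|
          ≤ C' * Real.sqrt (p.1 ^ 2 + p.2 ^ 2) ^ (-ε') := by
  have hπ : (0:ℝ) < π := Real.pi_pos
  set R₀ : ℝ := R + 1 with hR₀def
  have hRR₀ : R < R₀ := by simp [hR₀def]
  have hR₀pos : 0 < R₀ := lt_trans hR hRR₀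
  -- differentiability of radial curves
  have hcurve : ∀ (θ s : ℝ), R < s →
      DifferentiableAt ℝ (fun s => u (s * Real.cos θ, s * Real.sin θ)) s := by
    intro θ s hs
    have hs0 : 0 < s := lt_trans hR hs
    have h1 : DifferentiableAt ℝ (fun s : ℝ => (s * Real.cos θ, s * Real.sin θ)) s :=
      DifferentiableAt.prodMk (differentiableAt_id.mul_const _) (differentiableAt_id.mul_const _)
    have h2 : DifferentiableAt ℝ u (s * Real.cos θ, s * Real.sin θ) := by
      apply udiff hu
      show R < Real.sqrt ((s * Real.cos θ) ^ 2 + (s * Real.sin θ) ^ 2)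
      rwa [polar_norm _ _ hs0.le]
    exact h2.comp s h1
  -- differentiability of angular curves
  have hacurve : ∀ (r : ℝ), R < r → ∀ t : ℝ,
      DifferentiableAt ℝ (fun t => u (r * Real.cos t, r * Real.sin t)) t := by
    intro r hr t
    have hr0 : 0 < r := lt_trans hR hr
    have h1 : DifferentiableAt ℝ (fun t : ℝ => (r * Real.cos t, r * Real.sin t)) t :=
      DifferentiableAt.prodMk (Real.differentiable_cos.differentiableAt.const_mul r)
        (Real.differentiable_sin.differentiableAt.const_mul r)
    have h2 : DifferentiableAt ℝ u (r * Real.cos t, r * Real.sin t) := by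
      apply udiff hu
      show R < Real.sqrt ((r * Real.cos t) ^ 2 + (r * Real.sin t) ^ 2)
      rwa [polar_norm _ _ hr0.le]
    exact h2.comp t h1
  set g : ℝ → ℝ := fun s => u (s * Real.cos 0, s * Real.sin 0) with hgdef
  set A : ℝ := α / (2 * π) with hAdef
  set h : ℝ → ℝ := fun s => g s + A * Real.log s with hhdef
  set B : ℝ := C / ε with hBdef
  have hBpos : 0 < B := div_pos hC hε
  set φ : ℝ → ℝ := fun s => h s - B * s ^ (-ε) with hφdef
  set ψ : ℝ → ℝ := fun s => h s + B * s ^ (-ε) with hψdef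
  -- derivative facts
  have hder : ∀ s : ℝ, R < s →
      HasDerivAt h (deriv g s + A * s⁻¹) s ∧
      |deriv g s + A * s⁻¹| ≤ C * s ^ (-1 - ε) := by
    intro s hs
    have hs0 : 0 < s := lt_trans hR hs
    have hg : HasDerivAt g (deriv g s) s := (hcurve 0 s hs).hasDerivAt
    have hlog : HasDerivAt (fun s => A * Real.log s) (A * s⁻¹) s :=
      (Real.hasDerivAt_log hs0.ne').const_mul A
    refine ⟨hg.add hlog, ?_⟩
    have := hrad s 0 hs.le
    have heq : α / (2 * π * s) = A * s⁻¹ := by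
      rw [hAdef]; field_simp
    rwa [heq] at this
  have hpowd : ∀ s : ℝ, 0 < s →
      HasDerivAt (fun s : ℝ => B * s ^ (-ε)) (-(C * s ^ (-1 - ε))) s := by
    intro s hs0
    have := (Real.hasDerivAt_rpow_const (p := -ε) (Or.inl hs0.ne')).const_mul B
    refine this.congr_deriv ?_
    rw [hBdef]
    have : -1 - ε = -ε - 1 := by ring
    rw [this]
    field_simp
  -- monotonicity
  have hφd : ∀ s : ℝ, R < s →
      HasDerivAt φ ((deriv g s + A * s⁻¹) + C * s ^ (-1 - ε)) s := by
    intro s hs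
    have hs0 : 0 < s := lt_trans hR hs
    have := (hder s hs).1.sub (hpowd s hs0)
    rw [sub_neg_eq_add] at this
    exact this
  have hψd : ∀ s : ℝ, R < s →
      HasDerivAt ψ ((deriv g s + A * s⁻¹) - C * s ^ (-1 - ε)) s := by
    intro s hs
    have hs0 : 0 < s := lt_trans hR hs
    have := (hder s hs).1.add (hpowd s hs0)
    rw [← sub_eq_add_neg] at this
    exact this
  have hcont : ∀ f : ℝ → ℝ, (∀ s : ℝ, R < s → DifferentiableAt ℝ f s) → ContinuousOn f (Ici R₀) := by
    intro f hf s hs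
    exact ((hf s (lt_of_lt_of_le hRR₀ hs)).continuousAt).continuousWithinAt
  have hφmono : MonotoneOn φ (Ici R₀) := by
    apply monotoneOn_of_deriv_nonneg (convex_Ici R₀)
    · exact hcont φ fun s hs => (hφd s hs).differentiableAt
    · rw [interior_Ici]
      exact fun s hs => ((hφd s (lt_trans hRR₀ hs)).differentiableAt).differentiableWithinAt
    · rw [interior_Ici]
      intro s hs
      have hs' : R < s := lt_trans hRR₀ hs
      rw [(hφd s hs').deriv]
      have := (hder s hs').2
      have h1 := abs_le.mp this
      linarith [h1.1]
  have hψanti : AntitoneOn ψ (Ici R₀) := by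
    apply antitoneOn_of_deriv_nonpos (convex_Ici R₀)
    · exact hcont ψ fun s hs => (hψd s hs).differentiableAt
    · rw [interior_Ici]
      exact fun s hs => ((hψd s (lt_trans hRR₀ hs)).differentiableAt).differentiableWithinAt
    · rw [interior_Ici]
      intro s hs
      have hs' : R < s := lt_trans hRR₀ hs
      rw [(hψd s hs').deriv]
      have h1 := abs_le.mp (hder s hs').2
      linarith [h1.2]
  have hφψ : ∀ s : ℝ, 0 < s → φ s ≤ ψ s := by
    intro s hs0
    have : 0 ≤ B * s ^ (-ε) := mul_nonneg hBpos.le (Real.rpow_nonneg hs0.le _)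
    simp only [hφdef, hψdef]; linarith
  have hclaim : ∀ s t : ℝ, R₀ ≤ s → R₀ ≤ t → φ t ≤ ψ s := by
    intro s t hs ht
    rcases le_total t s with hts | hst
    · exact le_trans (hφmono ht hs hts) (hφψ s (lt_of_lt_of_le hR₀pos hs))
    · exact le_trans (hφψ t (lt_of_lt_of_le hR₀pos ht)) (hψanti hs ht hst)
  set c : ℝ := sSup (φ '' Ici R₀) with hcdef
  have hbdd : BddAbove (φ '' Ici R₀) := by
    refine ⟨ψ R₀, ?_⟩
    rintro y ⟨t, ht, rfl⟩
    exact hclaim R₀ t le_rfl ht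
  have hlow : ∀ s : ℝ, R₀ ≤ s → φ s ≤ c :=
    fun s hs => le_csSup hbdd ⟨s, hs, rfl⟩
  have hup : ∀ s : ℝ, R₀ ≤ s → c ≤ ψ s := by
    intro s hs
    apply csSup_le (Set.nonempty_Ici.image φ)
    rintro y ⟨t, ht, rfl⟩
    exact hclaim s t hs ht
  have hhc : ∀ s : ℝ, R₀ ≤ s → |h s - c| ≤ 2 * B * s ^ (-ε) := by
    intro s hs
    have hs0 : 0 < s := lt_of_lt_of_le hR₀pos hs
    have h0 : 0 ≤ B * s ^ (-ε) := mul_nonneg hBpos.le (Real.rpow_nonneg hs0.le _)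
    have h1 := hlow s hs
    have h2 := hup s hs
    rw [abs_le]
    constructor <;> simp only [hφdef, hψdef] at h1 h2 <;> linarith
  -- conclusion
  refine ⟨c, π * C + 2 * B, ε, R₀, hε, by positivity, ?_⟩
  intro p hp
  set r : ℝ := Real.sqrt (p.1 ^ 2 + p.2 ^ 2) with hrdef
  have hr0 : 0 < r := lt_of_lt_of_le hR₀pos hp
  have hrR : R < r := lt_of_lt_of_le hRR₀ hp
  -- polar representation of p
  set z : ℂ := ⟨p.1, p.2⟩ with hzdef
  have habs : ‖z‖ = r := by
    rw [Complex.norm_def, Complex.normSq_mk, hrdef]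
    ring_nf
  have hz0 : z ≠ 0 := by
    intro h0
    rw [h0] at habs
    simp at habs
    exact hr0.ne habs
  set θ : ℝ := Complex.arg z with hθdef
  have hp1 : r * Real.cos θ = p.1 := by
    rw [hθdef, Complex.cos_arg hz0, habs]
    field_simp
    rfl
  have hp2 : r * Real.sin θ = p.2 := by
    rw [hθdef, Complex.sin_arg, habs]
    field_simp
    rfl
  set k : ℝ → ℝ := fun t => u (r * Real.cos t, r * Real.sin t) with hkdef
  have hkθ : k θ = u p := by
    rw [hkdef]
    simp only []
    rw [hp1, hp2]
  have hang' : |k θ - k 0| ≤ (C * r ^ (-ε)) * π := by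
    have hmvt := Convex.norm_image_sub_le_of_norm_deriv_le (s := (univ : Set ℝ))
      (f := k) (C := C * r ^ (-ε)) (fun t _ => hacurve r hrR t)
      (fun t _ => by rw [Real.norm_eq_abs]; exact hang r t (le_of_lt hrR))
      convex_univ (mem_univ 0) (mem_univ θ)
    rw [Real.norm_eq_abs, Real.norm_eq_abs, sub_zero] at hmvt
    refine le_trans hmvt ?_
    exact mul_le_mul_of_nonneg_left (Complex.abs_arg_le_pi z)
      (mul_nonneg hC.le (Real.rpow_nonneg hr0.le _))
  have hk0 : k 0 = g r := rfl
  have hhr := hhc r hp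
  -- assemble
  have : |u p + A * Real.log r - c| ≤ (C * r ^ (-ε)) * π + 2 * B * r ^ (-ε) := by
    have e1 : u p + A * Real.log r - c = (k θ - k 0) + (h r - c) := by
      rw [hkθ, hk0, hhdef]; ring
    rw [e1]
    exact le_trans (abs_add_le _ _) (add_le_add hang' hhr)
  calc |u p + A * Real.log r - c| ≤ (C * r ^ (-ε)) * π + 2 * B * r ^ (-ε) := this
    _ = (π * C + 2 * B) * r ^ (-ε) := by ring
end
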